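/- arXiv:2102.04875 — 2 statements merged into one kernel-verified Lean document; each statement's English description precedes it below -/
import Mathlib

section
/- Let H and H' be two executions (functions applying the same set of operations in possibly different orders) over a shared state, such that every pair of non-commuting (conflicting) operations appears in the same relative order in H and H'. Then H and H' produce the same final state. Formally: if a list of state-update functions is permuted so that every pair of non-commuting functions keeps its relative order, the composite function is unchanged. -/
private lemma foldl_comm_aux {S : Type*} (g : S → S) :
    ∀ (A : List (S → S)), (∀ a ∈ A, a ∘ g = g ∘ a) →
      ∀ s : S, A.foldl (fun x f => f x) (g s) = g (A.foldl (fun x f => f x) s) := by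
  intro A
  induction A with
  | nil => intro _ s; simp
  | cons a A ih =>
    intro hA s
    have hag : a ∘ g = g ∘ a := hA a (by simp)
    have : a (g s) = g (a s) := congrFun hag s
    simp only [List.foldl_cons, this]
    exact ih (fun b hb => hA b (by simp [hb])) (a s)

private lemma key_aux {S ι : Type*} [DecidableEq ι] (f : ι → S → S) :
    ∀ (L₂ L₁ : List ι), L₁.Nodup → L₂.Perm L₁ →
      (∀ i j : ι, ¬ (f i ∘ f j = f j ∘ f i) → [i, j].Sublist L₁ → [i, j].Sublist L₂) →
      ∀ s : S, (L₂.map f).foldl (fun x g => g x) s = (L₁.map f).foldl (fun x g => g x) s := by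
  intro L₂
  induction L₂ with
  | nil =>
    intro L₁ _ hperm _ s
    have : L₁ = [] := (List.Perm.nil_eq hperm).symm
    simp [this]
  | cons j L₂' ih =>
    intro L₁ hnd hperm hord s
    have hjmem : j ∈ L₁ := hperm.mem_iff.mp (by simp)
    obtain ⟨A, B, rfl⟩ := List.append_of_mem hjmem
    have hndAB : (A ++ B).Nodup := (List.Sublist.append (List.Sublist.refl A)
      (List.sublist_cons_self j B)).nodup hnd
    have hjA : j ∉ A := by
      intro hjAmem
      have := List.disjoint_of_nodup_append hnd
      exact this hjAmem (by simp)
    have hjAB : j ∉ A ++ B := by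
      have hndB := hnd.of_append_right
      intro hmem
      rcases List.mem_append.mp hmem with h1 | h1
      · exact hjA h1
      · exact (List.nodup_cons.mp hndB).1 h1
    have hndL₂ : (j :: L₂').Nodup := hperm.nodup_iff.mpr hnd
    have hjL₂' : j ∉ L₂' := (List.nodup_cons.mp hndL₂).1
    -- every element of A commutes with j
    have hcommA : ∀ a ∈ A, f a ∘ f j = f j ∘ f a := by
      intro a haA
      by_contra hnc
      have hsub : [a, j].Sublist (A ++ j :: B) := by
        have h1 : [a].Sublist A := List.singleton_sublist.mpr haA
        have h2 : [j].Sublist (j :: B) := by simp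
        exact List.Sublist.append h1 h2
      have hsub2 : [a, j].Sublist (j :: L₂') := hord a j hnc hsub
      have haj : a ≠ j := fun hh => hjA (hh ▸ haA)
      rcases List.sublist_cons_iff.mp hsub2 with h1 | ⟨r, hr, hrs⟩
      · have : j ∈ L₂' := (List.Sublist.subset h1) (by simp)
        exact hjL₂' this
      · injection hr with h2 h3
        exact haj h2
    -- perm of remainders
    have hpermAB : L₂'.Perm (A ++ B) := by
      have h1 : (j :: L₂').Perm (j :: (A ++ B)) := hperm.trans List.perm_middle
      exact h1.cons_inv
    -- order condition for remainders
    have hordAB : ∀ i k : ι, ¬ (f i ∘ f k = f k ∘ f i) →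
        [i, k].Sublist (A ++ B) → [i, k].Sublist L₂' := by
      intro i k hnc hsub
      have hsubL₁ : [i, k].Sublist (A ++ j :: B) :=
        hsub.trans (List.Sublist.append (List.Sublist.refl A) (List.sublist_cons_self j B))
      have hsub2 : [i, k].Sublist (j :: L₂') := hord i k hnc hsubL₁
      have hij : i ≠ j := by
        intro hh
        exact hjAB (hh ▸ (hsub.subset (by simp)))
      rcases List.sublist_cons_iff.mp hsub2 with h1 | ⟨r, hr, hrs⟩
      · exact h1
      · injection hr with h2 h3
        exact absurd h2 hij
    -- now compute the folds
    have hRHS : ((A ++ j :: B).map f).foldl (fun x g => g x) s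
        = ((A ++ B).map f).foldl (fun x g => g x) (f j s) := by
      simp only [List.map_append, List.map_cons, List.foldl_append, List.foldl_cons]
      congr 1
      have := foldl_comm_aux (f j) (A.map f)
        (by intro a ha; obtain ⟨b, hb, rfl⟩ := List.mem_map.mp ha; exact hcommA b hb) s
      exact this.symm
    rw [hRHS]
    simp only [List.map_cons, List.foldl_cons]
    exact ih (A ++ B) hndAB hpermAB hordAB (f j s)

private lemma pair_sublist_finRange {n : ℕ} {i j : Fin n} (hij : i < j) :
    [i, j].Sublist (List.finRange n) := by
  have hij' : (i : ℕ) < (j : ℕ) := hij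
  have hjn : (j : ℕ) < n := j.2
  have h1 : [i].Sublist (List.take (i.1 + 1) (List.finRange n)) := by
    rw [List.singleton_sublist, List.mem_take_iff_getElem]
    refine ⟨i.1, ?_, ?_⟩
    · simp only [List.length_finRange]; omega
    · simp [List.getElem_finRange, Fin.ext_iff]
  have h2 : [j].Sublist (List.drop (i.1 + 1) (List.finRange n)) := by
    rw [List.singleton_sublist, List.mem_drop_iff_getElem]
    refine ⟨j.1 - (i.1 + 1), ?_, ?_⟩
    · simp only [List.length_finRange]; omega
    · have hh : i.1 + 1 + (j.1 - (i.1 + 1)) = j.1 := by omega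
      simp [hh, List.getElem_finRange, Fin.ext_iff]
  have := List.Sublist.append h1 h2
  rwa [List.take_append_drop] at this

private lemma lt_of_pair_sublist_finRange {n : ℕ} {i j : Fin n}
    (h : [i, j].Sublist (List.finRange n)) : i < j := by
  have hp : List.Pairwise (· < ·) [i, j] := List.Pairwise.sublist h (List.pairwise_lt_finRange n)
  exact (List.pairwise_cons.mp hp).1 j (by simp)

/-- Permuting a list of state-update functions while preserving the relative order of
every non-commuting pair leaves the composite (fold) unchanged. -/
theorem stmt_6 {S : Type*} (l : List (S → S)) (σ : Equiv.Perm (Fin l.length))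
    (h : ∀ i j : Fin l.length, i < j →
      ¬ (l.get i ∘ l.get j = l.get j ∘ l.get i) → σ.symm i < σ.symm j) :
    ∀ s : S, (List.ofFn (fun k => l.get (σ k))).foldl (fun x f => f x) s
      = l.foldl (fun x f => f x) s := by
  intro s
  have hL1 : l = (List.finRange l.length).map l.get := by
    rw [← List.ofFn_eq_map, List.ofFn_get]
  have hL2 : List.ofFn (fun k => l.get (σ k)) = ((List.finRange l.length).map σ).map l.get := by
    rw [List.ofFn_eq_map, List.map_map]
    rfl
  rw [hL2]
  conv_rhs => rw [hL1]
  refine key_aux l.get ((List.finRange l.length).map σ) (List.finRange l.length)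
    (List.nodup_finRange l.length) ?_ ?_ s
  · -- perm
    refine List.perm_of_nodup_nodup_toFinset_eq
      ((List.nodup_finRange l.length).map σ.injective) (List.nodup_finRange l.length) ?_
    apply Finset.ext
    intro a
    simp [List.mem_finRange]
    exact ⟨σ.symm a, by simp⟩
  · intro i j hnc hsub
    have hij : i < j := lt_of_pair_sublist_finRange hsub
    have hlt : σ.symm i < σ.symm j := h i j hij hnc
    have hsub2 : [σ.symm i, σ.symm j].Sublist (List.finRange l.length) := pair_sublist_finRange hlt
    have := hsub2.map σ
    simpa using this
end

section
/- Partition of transactions into a concurrent bin and a block graph preserves all conflicts: if every transaction placed in the concurrent bin conflicts with no other transaction in the block, then executing all concurrent-bin transactions first in arbitrary order, followed by any topological order of the block-graph transactions, yields an execution in which every conflicting pair appears in the same relative order as in the miner's execution. -/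
/-- Partition into concurrent bin and block graph preserves all conflicts: executing
bin transactions first (in arbitrary order) followed by a topological order of the
block-graph transactions orders every conflicting pair as in the miner's execution. -/
theorem stmt_10 {S : Type*} {n : ℕ} (f : Fin n → S → S) (bin : Finset (Fin n))
    (E : Fin n → Fin n → Prop)
    (hbin : ∀ i ∈ bin, ∀ j, j ≠ i → f i ∘ f j = f j ∘ f i)
    (hEorient : ∀ i j, i ∉ bin → j ∉ bin → ¬ (f i ∘ f j = f j ∘ f i) → i < j → E i j)
    (hEord : ∀ i j, E i j → i < j)
    (π : Equiv.Perm (Fin n))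
    (hbinfirst : ∀ i ∈ bin, ∀ j, j ∉ bin → π.symm i < π.symm j)
    (htopo : ∀ i j, E i j → π.symm i < π.symm j) :
    ∀ i j, ¬ (f i ∘ f j = f j ∘ f i) → (i < j ↔ π.symm i < π.symm j) := by
  intro i j hne
  have hij : i ≠ j := by rintro rfl; exact hne rfl
  have hi : i ∉ bin := fun h => hne (hbin i h j hij.symm)
  have hj : j ∉ bin := fun h => hne ((hbin j h i hij).symm)
  have hne' : ¬ (f j ∘ f i = f i ∘ f j) := fun h => hne h.symm
  constructor
  · intro h
    exact htopo i j (hEorient i j hi hj hne h)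
  · intro h
    rcases lt_trichotomy i j with h' | rfl | h'
    · exact h'
    · exact absurd h (lt_irrefl _)
    · exact absurd (htopo j i (hEorient j i hj hi hne' h')) (lt_asymm h)
end
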